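/- For λ ∈ (0,1), (λ/(1+λ)^{3/2}) ∫₀¹ z/(√(1-z)·√(1-z+λ(1+z))) dz = (λ/(1-λ²)^{3/2})·( log((1+√(1-λ²))/λ) - √(1-λ²) ). -/

import Mathlib

/-!
The integrand has the elementary primitive
`F(z) = (√(1-z) √(1-z+λ(1+z)) - 2/√(1-λ) · arsinh (√(1-λ) √(1-z) / √(2λ))) / (1-λ)`,
which vanishes at `z = 1`. The singularity at `z = 1` is of type `(1-z)^(-1/2)`, hence integrable,
so the integral is `-F(0)`, and the `arsinh` term at `z = 0` is half of
`log ((1 + √(1-λ²)) / λ)`.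
-/

open Real MeasureTheory

noncomputable def timeMapIntegrand (lam z : ℝ) : ℝ :=
  z / (√(1 - z) * √(1 - z + lam * (1 + z)))

noncomputable def timeMapPrimitive (lam z : ℝ) : ℝ :=
  (√(1 - z) * √(1 - z + lam * (1 + z))
    - 2 / √(1 - lam) * arsinh (√(1 - lam) * √(1 - z) / √(2 * lam))) / (1 - lam)

theorem rpow_three_halves {x : ℝ} (hx : 0 ≤ x) : x ^ ((3 : ℝ) / 2) = x * √x := by
  rw [show (3 : ℝ) / 2 = 1 + 1 / 2 by norm_num, rpow_add' hx (by norm_num), rpow_one,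
    sqrt_eq_rpow]

theorem sqrt_one_add_sq_sqrt_mul_sqrt_div {a b y : ℝ} (ha : 0 ≤ a) (hb : 0 < b) (hy : 0 ≤ y) :
    √(1 + (√a * √y / √b) ^ 2) = √(b + a * y) / √b := by
  rw [← sqrt_div' _ hb.le]
  congr 1
  rw [div_pow, mul_pow, sq_sqrt ha, sq_sqrt hy, sq_sqrt hb.le]
  field_simp

theorem hasDerivAt_timeMapPrimitive {lam x : ℝ} (h0 : 0 < lam) (h1 : lam < 1)
    (hx : x ∈ Set.Ioo (-1) 1) :
    HasDerivAt (timeMapPrimitive lam) (timeMapIntegrand lam x) x := by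
  obtain ⟨hx0, hx1⟩ := hx
  have hq : 0 < 1 - x + lam * (1 + x) := by nlinarith
  have hsub : HasDerivAt (fun z : ℝ => 1 - z) (-1) x := (hasDerivAt_id' x).const_sub 1
  have hp : HasDerivAt (fun z => √(1 - z)) (-(1 / (2 * √(1 - x)))) x :=
    (hsub.sqrt (by linarith)).congr_deriv (by ring)
  have hlin : HasDerivAt (fun z => 1 - z + lam * (1 + z)) (lam - 1) x :=
    (hsub.add (((hasDerivAt_id' x).const_add 1).const_mul lam)).congr_deriv (by ring)
  have hq' : HasDerivAt (fun z => √(1 - z + lam * (1 + z)))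
      ((lam - 1) / (2 * √(1 - x + lam * (1 + x)))) x :=
    (hlin.sqrt hq.ne').congr_deriv (by ring)
  have harg : HasDerivAt (fun z => arsinh (√(1 - lam) * √(1 - z) / √(2 * lam)))
      ((√(1 - x + lam * (1 + x)) / √(2 * lam))⁻¹ *
        (√(1 - lam) * -(1 / (2 * √(1 - x))) / √(2 * lam))) x := by
    have := (hasDerivAt_arsinh _).comp x ((hp.const_mul (√(1 - lam))).div_const (√(2 * lam)))
    rwa [sqrt_one_add_sq_sqrt_mul_sqrt_div (by linarith) (by linarith) (by linarith),
      show 2 * lam + (1 - lam) * (1 - x) = 1 - x + lam * (1 + x) by ring] at this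
  refine (((hp.mul hq').sub (harg.const_mul (2 / √(1 - lam)))).div_const (1 - lam)).congr_deriv
    ?_
  have : 0 < √(1 - x) := sqrt_pos.2 (by linarith)
  have : 0 < √(1 - x + lam * (1 + x)) := sqrt_pos.2 hq
  have : 0 < √(1 - lam) := sqrt_pos.2 (by linarith)
  have : 0 < √(2 * lam) := sqrt_pos.2 (by linarith)
  have : 1 - lam ≠ 0 := by linarith
  unfold timeMapIntegrand
  field_simp
  linear_combination (lam - 1) * sq_sqrt (by linarith : (0:ℝ) ≤ 1 - x) - sq_sqrt hq.le

theorem continuous_timeMapPrimitive (lam : ℝ) : Continuous (timeMapPrimitive lam) := by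
  unfold timeMapPrimitive
  have h1 : Continuous fun z : ℝ => √(1 - z) * √(1 - z + lam * (1 + z)) := by fun_prop
  have h2 : Continuous fun z : ℝ => arsinh (√(1 - lam) * √(1 - z) / √(2 * lam)) :=
    continuous_arsinh.comp (by fun_prop)
  exact (h1.sub (h2.const_mul _)).div_const _

theorem intervalIntegrable_div_sqrt_one_sub {g : ℝ → ℝ} (hg : ContinuousOn g (Set.Icc 0 1)) :
    IntervalIntegrable (fun z => g z / √(1 - z)) volume 0 1 := by
  have hsing : IntervalIntegrable (fun z : ℝ => (1 - z) ^ (-(1 / 2) : ℝ)) volume 0 1 := by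
    have hrpow := intervalIntegral.intervalIntegrable_rpow' (a := 0) (b := 1) (r := -(1 / 2))
      (by norm_num)
    simpa using (hrpow.comp_sub_left 1).symm
  refine (hsing.continuousOn_mul (by rwa [Set.uIcc_of_le zero_le_one])).congr fun z hz => ?_
  rw [Set.uIoc_of_le zero_le_one] at hz
  rw [rpow_neg (by linarith [hz.2]), ← sqrt_eq_rpow, div_eq_mul_inv]

theorem intervalIntegrable_timeMapIntegrand {lam : ℝ} (h0 : 0 < lam) :
    IntervalIntegrable (timeMapIntegrand lam) volume 0 1 := by
  have hg : ContinuousOn (fun z => z / √(1 - z + lam * (1 + z))) (Set.Icc 0 1) :=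
    continuousOn_id.div (by fun_prop) fun z hz => (sqrt_pos.2 (by nlinarith [hz.1, hz.2])).ne'
  unfold timeMapIntegrand
  simpa only [div_mul_eq_div_div_swap] using intervalIntegrable_div_sqrt_one_sub hg

theorem two_mul_arsinh_eq_log {lam : ℝ} (h0 : 0 < lam) (h1 : lam ≤ 1) :
    2 * arsinh (√(1 - lam) / √(2 * lam)) = log ((1 + √(1 - lam ^ 2)) / lam) := by
  have hm : 0 ≤ 1 - lam := by linarith
  have hp : 0 ≤ 1 + lam := by linarith
  have hroot : √(1 + (√(1 - lam) / √(2 * lam)) ^ 2) = √(1 + lam) / √(2 * lam) := by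
    rw [div_pow, sq_sqrt hm, sq_sqrt (by positivity), ← sqrt_div' _ (by positivity)]
    congr 1
    field_simp
    ring
  have hsq : (1 + √(1 - lam ^ 2)) / lam
      = (√(1 - lam) / √(2 * lam) + √(1 + lam) / √(2 * lam)) ^ 2 := by
    rw [show 1 - lam ^ 2 = (1 - lam) * (1 + lam) by ring, sqrt_mul hm]
    have : 0 < √(2 * lam) := sqrt_pos.2 (by linarith)
    field_simp
    rw [sq_sqrt (by positivity), add_sq, sq_sqrt hm, sq_sqrt hp]
    ring
  rw [arsinh, hroot, hsq, log_pow]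
  push_cast
  ring

theorem integral_timeMapIntegrand {lam : ℝ} (h0 : 0 < lam) (h1 : lam < 1) :
    ∫ z in (0:ℝ)..1, timeMapIntegrand lam z
      = (log ((1 + √(1 - lam ^ 2)) / lam) / √(1 - lam) - √(1 + lam)) / (1 - lam) := by
  rw [intervalIntegral.integral_eq_sub_of_hasDerivAt_of_le zero_le_one
    (continuous_timeMapPrimitive lam).continuousOn
    (fun x hx => hasDerivAt_timeMapPrimitive h0 h1 ⟨by linarith [hx.1], hx.2⟩)
    (intervalIntegrable_timeMapIntegrand h0), ← two_mul_arsinh_eq_log h0 h1.le]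
  simp only [timeMapPrimitive, sub_self, sub_zero, sqrt_zero, sqrt_one, zero_mul, mul_zero, mul_one,
    zero_div, arsinh_zero, add_zero, one_mul]
  ring

theorem stmt_9 (lam : ℝ) (hlam : lam ∈ Set.Ioo 0 1) :
    (lam / (1 + lam) ^ ((3:ℝ)/2)) *
        ∫ z in (0:ℝ)..1, z / (Real.sqrt (1 - z) * Real.sqrt (1 - z + lam * (1 + z))) =
      (lam / (1 - lam ^ 2) ^ ((3:ℝ)/2)) *
        (Real.log ((1 + Real.sqrt (1 - lam ^ 2)) / lam) - Real.sqrt (1 - lam ^ 2)) := by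
  obtain ⟨h0, h1⟩ := hlam
  simp only [← timeMapIntegrand.eq_1]
  rw [integral_timeMapIntegrand h0 h1, rpow_three_halves (by linarith),
    rpow_three_halves (by nlinarith), show 1 - lam ^ 2 = (1 - lam) * (1 + lam) by ring,
    sqrt_mul (by linarith)]
  have : 0 < √(1 - lam) := sqrt_pos.2 (by linarith)
  have : 0 < √(1 + lam) := sqrt_pos.2 (by linarith)
  have : 1 - lam ≠ 0 := by linarith
  field_simp
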